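/- Let R be a ring and C a class of chain complexes of right R-modules. The class ₍C₎W of all C-acyclic complexes is thick in Ch(R)_pur: for every short exact sequence of chain complexes 0 → W → X → Y → 0 that is pure exact in each degree, if any two of W, X, Y are C-acyclic then so is the third. -/

import Mathlib

open CategoryTheory Limits

noncomputable section


namespace KFlatPaper

variable (R : Type) [Ring R]

/-- Cochain complexes of left `R`-modules (indexed by `ℤ`). -/
abbrev Cx := CochainComplex (ModuleCat.{0} R) ℤ

/-- Cochain complexes of right `R`-modules. -/
abbrev CxOp := CochainComplex (ModuleCat.{0} Rᵐᵒᵖ) ℤ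

section Tensor

variable (M : Type) [AddCommGroup M] [Module Rᵐᵒᵖ M]
variable (N : Type) [AddCommGroup N] [Module R N]

/-- The subgroup of `M ⊗[ℤ] N` generated by the balancing relations `(m·r) ⊗ n - m ⊗ (r·n)`. -/
def mtRel : AddSubgroup (TensorProduct ℤ M N) :=
  AddSubgroup.closure {z | ∃ (r : R) (m : M) (n : N),
    z = (MulOpposite.op r • m) ⊗ₜ[ℤ] n - m ⊗ₜ[ℤ] (r • n)}

/-- The tensor product `M ⊗_R N` of a right `R`-module and a left `R`-module
(as an abelian group). -/
def mt := TensorProduct ℤ M N ⧸ mtRel R M N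

instance : AddCommGroup (mt R M N) := QuotientAddGroup.Quotient.addCommGroup _

variable {R M N}
variable {M' : Type} [AddCommGroup M'] [Module Rᵐᵒᵖ M']
variable {N' : Type} [AddCommGroup N'] [Module R N']

/-- Functoriality of `mt` in both variables. -/
def mtMap (f : M →ₗ[Rᵐᵒᵖ] M') (g : N →ₗ[R] N') : mt R M N →+ mt R M' N' :=
  QuotientAddGroup.map _ _
    (TensorProduct.map (f.toAddMonoidHom.toIntLinearMap) (g.toAddMonoidHom.toIntLinearMap)).toAddMonoidHom
    (by
      rw [mtRel, AddSubgroup.closure_le]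
      rintro z ⟨r, m, n, rfl⟩
      simp only [SetLike.mem_coe, AddSubgroup.mem_comap, LinearMap.toAddMonoidHom_coe,
        map_sub, TensorProduct.map_tmul, AddMonoidHom.coe_toIntLinearMap,
        LinearMap.toAddMonoidHom_coe]
      rw [f.map_smul, g.map_smul]
      exact AddSubgroup.subset_closure ⟨r, f m, g n, rfl⟩)

end Tensor


section TensorComplex

variable {R}

/-- Degree `n` part of the tensor product complex `C ⊗_R W`. -/
abbrev tobj (C : CxOp R) (W : Cx R) (n : ℤ) : Type :=
  DirectSum ℤ (fun i => mt R (C.X i) (W.X (n - i)))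

/-- The differential of the tensor product complex `C ⊗_R W`,
given on `x ⊗ y` by `dx ⊗ y + (-1)^{|x|} x ⊗ dy`. -/
def td (C : CxOp R) (W : Cx R) (n : ℤ) : tobj C W n →+ tobj C W (n + 1) :=
  DirectSum.toAddMonoid fun i =>
    (DirectSum.of (fun j => mt R (C.X j) (W.X (n + 1 - j))) (i + 1)).comp
      (mtMap (C.d i (i + 1)).hom ((W.XIsoOfEq (show n - i = n + 1 - (i + 1) by ring)).hom.hom))
    + (((-1 : ℤˣ) ^ i : ℤˣ) : ℤ) •
      (DirectSum.of (fun j => mt R (C.X j) (W.X (n + 1 - j))) i).comp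
        (mtMap LinearMap.id
          (((W.XIsoOfEq (show n - i + 1 = n + 1 - i by ring)).hom.hom : W.X (n-i+1) →ₗ[R] W.X (n+1-i)) ∘ₗ
            ((W.d (n - i) (n - i + 1)).hom : W.X (n-i) →ₗ[R] W.X (n-i+1))))

/-- Cast between degreewise parts of the tensor complex. -/
def tcast (C : CxOp R) (W : Cx R) {m n : ℤ} (h : m = n) : tobj C W m →+ tobj C W n := by
  subst h; exact AddMonoidHom.id _

/-- `C ⊗_R W` is acyclic (exact). -/
def TAcyclic (C : CxOp R) (W : Cx R) : Prop :=
  ∀ n : ℤ, Function.Exact (td C W n) (td C W (n + 1))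

/-- Functoriality of the tensor complex in the second variable. -/
def tmapR (C : CxOp R) {W W' : Cx R} (φ : W ⟶ W') (n : ℤ) : tobj C W n →+ tobj C W' n :=
  DirectSum.toAddMonoid fun i =>
    (DirectSum.of (fun j => mt R (C.X j) (W'.X (n - j))) i).comp
      (mtMap LinearMap.id (φ.f (n - i)).hom)

/-- The boundaries subgroup `B_n(C ⊗_R W)`. -/
def tB (C : CxOp R) (W : Cx R) (n : ℤ) : AddSubgroup (tobj C W n) :=
  AddMonoidHom.range ((tcast C W (show n - 1 + 1 = n by ring)).comp (td C W (n - 1)))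

/-- The cycles subgroup `Z_n(C ⊗_R W)`. -/
def tZ (C : CxOp R) (W : Cx R) (n : ℤ) : AddSubgroup (tobj C W n) :=
  AddMonoidHom.ker (td C W n)

end TensorComplex


section ModuleTensor

variable {R}
variable (M : Type) [AddCommGroup M] [Module Rᵐᵒᵖ M]

/-- The differential of the complex `M ⊗_R W`, for a right `R`-module `M`. -/
def mtd (W : Cx R) (n m : ℤ) : mt R M (W.X n) →+ mt R M (W.X m) :=
  mtMap LinearMap.id (W.d n m).hom

/-- `M ⊗_R W` is acyclic, for a right `R`-module `M`. -/
def MTAcyclic (W : Cx R) : Prop :=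
  ∀ n : ℤ, Function.Exact (mtd M W (n - 1) n) (mtd M W n (n + 1))

end ModuleTensor

section Classes

variable {R}

/-- `W` is `𝒞`-acyclic : `C ⊗_R W` is acyclic for every `C ∈ 𝒞`. -/
def CAcyclic (𝒞 : Set (CxOp R)) (W : Cx R) : Prop := ∀ C ∈ 𝒞, TAcyclic C W

/-- A complex is acyclic (exact) if it is exact in every degree. -/
def Acyclic {S : Type} [Ring S] (X : CochainComplex (ModuleCat.{0} S) ℤ) : Prop :=
  ∀ n : ℤ, X.ExactAt n

/-- `W` is K-flat : `E ⊗_R W` is acyclic for every acyclic complex `E`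
of right `R`-modules. -/
def KFlat (W : Cx R) : Prop := ∀ E : CxOp R, Acyclic E → TAcyclic E W

/-- `W` is pure acyclic : `M ⊗_R W` is acyclic for every right `R`-module `M`. -/
def PureAcyclic (W : Cx R) : Prop :=
  ∀ (M : Type) [AddCommGroup M] [Module Rᵐᵒᵖ M], MTAcyclic M W

end Classes

section Purity

variable {R}
variable {A B C : Type} [AddCommGroup A] [Module R A] [AddCommGroup B] [Module R B]
  [AddCommGroup C] [Module R C]

/-- `0 → A → B → C → 0` is a pure exact sequence of left `R`-modules:
it is a short exact sequence which stays short exact after applying `M ⊗_R -`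
for every right `R`-module `M`. -/
def PureSESMod (f : A →ₗ[R] B) (g : B →ₗ[R] C) : Prop :=
  (Function.Injective f ∧ Function.Exact f g ∧ Function.Surjective g) ∧
  ∀ (M : Type) [AddCommGroup M] [Module Rᵐᵒᵖ M],
    Function.Injective (mtMap (LinearMap.id (M := M)) f) ∧
    Function.Exact (mtMap (LinearMap.id (M := M)) f) (mtMap (LinearMap.id (M := M)) g) ∧
    Function.Surjective (mtMap (LinearMap.id (M := M)) g)

/-- `f` is a pure monomorphism of left `R`-modules. -/
def PureMonoMod (f : A →ₗ[R] B) : Prop :=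
  Function.Injective f ∧
  ∀ (M : Type) [AddCommGroup M] [Module Rᵐᵒᵖ M],
    Function.Injective (mtMap (LinearMap.id (M := M)) f)

/-- A pure-injective left `R`-module: one which is injective relative to
pure exact sequences (equivalently, to pure monomorphisms) of modules. -/
def PureInjMod (I : Type) [AddCommGroup I] [Module R I] : Prop :=
  ∀ (A' B' : Type) [AddCommGroup A'] [Module R A'] [AddCommGroup B'] [Module R B']
    (f : A' →ₗ[R] B'), PureMonoMod f →
      ∀ u : A' →ₗ[R] I, ∃ v : B' →ₗ[R] I, v ∘ₗ f = u

/-- A short exact sequence of complexes which is pure exact in each degree: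
an admissible short exact sequence of `Ch(R)_pur`. -/
def DWPureSES {X Y Z : Cx R} (f : X ⟶ Y) (g : Y ⟶ Z) : Prop :=
  ∀ n : ℤ, PureSESMod (f.f n).hom (g.f n).hom

/-- A degreewise pure monomorphism of complexes (an admissible monomorphism
of `Ch(R)_pur`). -/
def DWPureMonoCx {X Y : Cx R} (f : X ⟶ Y) : Prop :=
  ∀ n : ℤ, PureMonoMod (f.f n).hom

end Purity

section Cotorsion

variable {R}

/-- `Ext¹_pur(X, Y) = 0` : every degreewise pure short exact sequence
`0 → Y → Z → X → 0` splits. -/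
def ExtPur1Zero (X Y : Cx R) : Prop :=
  ∀ (Z : Cx R) (i : Y ⟶ Z) (p : Z ⟶ X), DWPureSES i p → ∃ r : Z ⟶ Y, i ≫ r = 𝟙 Y

/-- The right `Ext¹_pur`-orthogonal of a class of complexes. -/
def rOrth (𝒜 : Set (Cx R)) : Set (Cx R) := {Y | ∀ X ∈ 𝒜, ExtPur1Zero X Y}

/-- The left `Ext¹_pur`-orthogonal of a class of complexes. -/
def lOrth (ℬ : Set (Cx R)) : Set (Cx R) := {X | ∀ Y ∈ ℬ, ExtPur1Zero X Y}

/-- A cotorsion pair in `Ch(R)_pur`. -/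
def CotorsionPair (𝒜 ℬ : Set (Cx R)) : Prop := 𝒜 = lOrth ℬ ∧ ℬ = rOrth 𝒜

/-- Completeness of a cotorsion pair `(𝒜, ℬ)` in `Ch(R)_pur` : every complex has
an approximation sequence on each side, by degreewise pure short exact sequences. -/
def CompletePair (𝒜 ℬ : Set (Cx R)) : Prop :=
  (∀ X : Cx R, ∃ (B A : Cx R) (i : B ⟶ A) (p : A ⟶ X),
      DWPureSES i p ∧ A ∈ 𝒜 ∧ B ∈ ℬ) ∧
  (∀ X : Cx R, ∃ (B A : Cx R) (i : X ⟶ B) (p : B ⟶ A),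
      DWPureSES i p ∧ B ∈ ℬ ∧ A ∈ 𝒜)

/-- The pair is hereditary: the left class is closed under kernels of admissible
epimorphisms between its members. -/
def HereditaryLeft (𝒜 : Set (Cx R)) : Prop :=
  ∀ (K A₁ A₂ : Cx R) (i : K ⟶ A₁) (p : A₁ ⟶ A₂),
    DWPureSES i p → A₁ ∈ 𝒜 → A₂ ∈ 𝒜 → K ∈ 𝒜

/-- Two-out-of-three for a class, relative to the degreewise pure exact structure. -/
def TwoOutOfThree (𝒲 : Set (Cx R)) : Prop :=
  ∀ (X Y Z : Cx R) (f : X ⟶ Y) (g : Y ⟶ Z), DWPureSES f g →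
    ((X ∈ 𝒲 → Y ∈ 𝒲 → Z ∈ 𝒲) ∧ (X ∈ 𝒲 → Z ∈ 𝒲 → Y ∈ 𝒲) ∧ (Y ∈ 𝒲 → Z ∈ 𝒲 → X ∈ 𝒲))

/-- `X` is a retract (direct summand) of `Y`. -/
def IsRetractOf (X Y : Cx R) : Prop := ∃ (s : X ⟶ Y) (r : Y ⟶ X), s ≫ r = 𝟙 X

/-- A thick class: closed under retracts and satisfying two-out-of-three for
degreewise pure short exact sequences. -/
def ThickClass (𝒲 : Set (Cx R)) : Prop :=
  (∀ X Y : Cx R, IsRetractOf X Y → Y ∈ 𝒲 → X ∈ 𝒲) ∧ TwoOutOfThree 𝒲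

/-- An injective object of the exact category `Ch(R)_pur`. -/
def PurInjObjCx (I : Cx R) : Prop :=
  ∀ (X Y : Cx R) (f : X ⟶ Y), DWPureMonoCx f → ∀ u : X ⟶ I, ∃ v : Y ⟶ I, f ≫ v = u

/-- An injective cotorsion pair `(𝒲, ℱ)` in `Ch(R)_pur`: a complete cotorsion pair
with thick left class whose core `𝒲 ∩ ℱ` is the class of injective objects of
`Ch(R)_pur`. -/
def InjectiveCP (𝒲 ℱ : Set (Cx R)) : Prop :=
  CotorsionPair 𝒲 ℱ ∧ CompletePair 𝒲 ℱ ∧ ThickClass 𝒲 ∧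
    (𝒲 ∩ ℱ = {I : Cx R | PurInjObjCx I})

/-- A Hovey triple `(𝒬, 𝒲, ℱ)` for the exact category `Ch(R)_pur`: the data of an
abelian (exact) model structure on `Ch(R)_pur` with cofibrant objects `𝒬`, trivial
objects `𝒲`, and fibrant objects `ℱ`. -/
def HoveyTriple (𝒬 𝒲 ℱ : Set (Cx R)) : Prop :=
  ThickClass 𝒲 ∧
    (CotorsionPair (𝒬 ∩ 𝒲) ℱ ∧ CompletePair (𝒬 ∩ 𝒲) ℱ) ∧
    (CotorsionPair 𝒬 (𝒲 ∩ ℱ) ∧ CompletePair 𝒬 (𝒲 ∩ ℱ))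

/-- A cotorsion pair is cogenerated by a set `S` when its right class is `S^⊥`;
`S` is required to be small (a set, not a proper class). -/
def CogenBySet (ℬ : Set (Cx R)) : Prop :=
  ∃ S : Set (Cx R), Small.{0} S ∧ ℬ = rOrth S

/-- The abelian model structure given by a Hovey triple is cofibrantly generated:
both of its associated complete cotorsion pairs are cogenerated by sets. -/
def CofibrantlyGenerated (𝒬 𝒲 ℱ : Set (Cx R)) : Prop :=
  CogenBySet ℱ ∧ CogenBySet (𝒲 ∩ ℱ)

/-- The weak equivalences of the abelian model structure determined by the
Hovey triple `(𝒬, 𝒲, ℱ)` : morphisms factoring as an admissible monomorphism with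
trivially cofibrant cokernel followed by an admissible epimorphism with trivially
fibrant kernel. -/
def WeakEq (𝒬 𝒲 ℱ : Set (Cx R)) : MorphismProperty (Cx R) := fun X Y f =>
  ∃ (Z : Cx R) (i : X ⟶ Z) (p : Z ⟶ Y), f = i ≫ p ∧
    (∃ (T : Cx R) (q : Z ⟶ T), DWPureSES i q ∧ T ∈ 𝒬 ∩ 𝒲) ∧
    (∃ (K : Cx R) (k : K ⟶ Z), DWPureSES k p ∧ K ∈ 𝒲 ∩ ℱ)

/-- The homotopy category of the abelian model structure determined by a Hovey
triple: the localization at its weak equivalences. -/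
def HoCat (𝒬 𝒲 ℱ : Set (Cx R)) := (WeakEq 𝒬 𝒲 ℱ).Localization

instance (𝒬 𝒲 ℱ : Set (Cx R)) : Category (HoCat 𝒬 𝒲 ℱ) := by
  unfold HoCat; infer_instance

end Cotorsion

section HomotopyCat

variable {R}

/-- The chain homotopy category `K(R)`. -/
abbrev KR := HomotopyCategory (ModuleCat.{0} R) (ComplexShape.up ℤ)

/-- The full subcategory of `K(R)` of all complexes homotopy equivalent to
(i.e. isomorphic in `K(R)` to) a complex satisfying `P`. -/
def Ksub (P : Set (Cx R)) :=
  ObjectProperty.FullSubcategory (fun X : KR (R := R) =>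
    ∃ Y : Cx R, P Y ∧
      Nonempty ((((HomotopyCategory.quotient (ModuleCat.{0} R) (ComplexShape.up ℤ))).obj Y ≅ X)))

instance (P : Set (Cx R)) : Category (Ksub P) := by
  unfold Ksub; infer_instance

/-- A contractible complex. -/
def Contractible (X : Cx R) : Prop := Nonempty (Homotopy (𝟙 X) 0)

/-- The class of complexes of pure-injective modules. -/
def dwPI : Set (Cx R) := {X | ∀ n : ℤ, PureInjMod (R := R) (X.X n)}

/-- The class of acyclic (exact) complexes of pure-injective modules. -/
def exPI : Set (Cx R) := {X | Acyclic X ∧ ∀ n : ℤ, PureInjMod (R := R) (X.X n)}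

end HomotopyCat


section QuasiIso

variable {R}
variable (M : Type) [AddCommGroup M] [Module Rᵐᵒᵖ M]

/-- Boundaries of the complex `M ⊗_R W` in degree `n`. -/
def mtB (W : Cx R) (n : ℤ) : AddSubgroup (mt R M (W.X n)) :=
  AddMonoidHom.range (mtd M W (n - 1) n)

/-- Cycles of the complex `M ⊗_R W` in degree `n`. -/
def mtZ (W : Cx R) (n : ℤ) : AddSubgroup (mt R M (W.X n)) :=
  AddMonoidHom.ker (mtd M W n (n + 1))

/-- For a chain map `f : X → Y`, the map `M ⊗_R f` is a homology isomorphism: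
it induces a bijection on the homology of the complexes `M ⊗_R X` and `M ⊗_R Y`
in every degree. -/
def MTQuasiIso {X Y : Cx R} (f : X ⟶ Y) : Prop :=
  ∀ n : ℤ,
    (∀ x ∈ mtZ M X n, mtMap (LinearMap.id (M := M)) (f.f n).hom x ∈ mtB M Y n → x ∈ mtB M X n) ∧
    (∀ y ∈ mtZ M Y n, ∃ x ∈ mtZ M X n,
      mtMap (LinearMap.id (M := M)) (f.f n).hom x - y ∈ mtB M Y n)

/-- `f` is a pure homology isomorphism: `M ⊗_R f` is a homology isomorphism for
every right `R`-module `M`. -/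
def PureQuasiIso {X Y : Cx R} (f : X ⟶ Y) : Prop :=
  ∀ (M : Type) [AddCommGroup M] [Module Rᵐᵒᵖ M], MTQuasiIso M f

/-- For a chain map `f : X → Y` and a complex `C` of right modules, `C ⊗_R f`
is a homology isomorphism. -/
def TQuasiIso (C : CxOp R) {X Y : Cx R} (f : X ⟶ Y) : Prop :=
  ∀ n : ℤ,
    (∀ x ∈ tZ C X n, tmapR C f n x ∈ tB C Y n → x ∈ tB C X n) ∧
    (∀ y ∈ tZ C Y n, ∃ x ∈ tZ C X n, tmapR C f n x - y ∈ tB C Y n)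

/-- `f` is a K-flat quism: `E ⊗_R f` is a homology isomorphism for every
acyclic complex `E` of right `R`-modules. -/
def KFlatQuism {X Y : Cx R} (f : X ⟶ Y) : Prop :=
  ∀ E : CxOp R, Acyclic E → TQuasiIso E f

end QuasiIso


section Transfinite

variable {R}

/-- The restriction of a chain `F : J ⥤ Ch(R)` to the interval below `j`. -/
def iioDiagram {J : Type} [Preorder J] (F : J ⥤ Cx R) (j : J) : Set.Iio j ⥤ Cx R :=
  (Monotone.functor (f := fun i : Set.Iio j => (i : J)) (fun _ _ h => h)).comp F

/-- The canonical cocone on the restriction of `F` below `j`, with apex `F.obj j`. -/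
def iioCocone {J : Type} [Preorder J] (F : J ⥤ Cx R) (j : J) : Cocone (iioDiagram F j) where
  pt := F.obj j
  ι :=
    { app := fun i => F.map (homOfLE i.2.le)
      naturality := fun a b h => by
        dsimp [iioDiagram]
        rw [Category.comp_id, ← F.map_comp]
        congr 1 }

end Transfinite


section Pontryagin

variable {R}
variable (M : Type) [AddCommGroup M] [Module Rᵐᵒᵖ M]

/-- The Pontryagin dual (character module) `Hom_ℤ(M, ℚ/ℤ)` of a right `R`-module,
as a left `R`-module, where `R` acts by `(r • φ) m = φ (m • r)`. -/
def CharMod : Type := M →+ (AddCircle (1 : ℚ))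

instance : AddCommGroup (CharMod M) :=
  inferInstanceAs (AddCommGroup (M →+ AddCircle (1 : ℚ)))

instance : FunLike (CharMod M) M (AddCircle (1 : ℚ)) :=
  inferInstanceAs (FunLike (M →+ AddCircle (1 : ℚ)) M (AddCircle (1 : ℚ)))

instance : AddMonoidHomClass (CharMod M) M (AddCircle (1 : ℚ)) :=
  inferInstanceAs (AddMonoidHomClass (M →+ AddCircle (1 : ℚ)) M (AddCircle (1 : ℚ)))

variable {M}

theorem charExt {φ ψ : CharMod M} (h : ∀ m, φ m = ψ m) : φ = ψ :=
  AddMonoidHom.ext h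

variable (M)

instance : Module R (CharMod M) where
  smul r φ := (φ : M →+ _).comp (DistribMulAction.toAddMonoidHom M (MulOpposite.op r))
  one_smul φ := charExt fun m => by
    show φ ((MulOpposite.op (1 : R)) • m) = φ m
    simp
  mul_smul r s φ := charExt fun m => by
    show φ ((MulOpposite.op (r * s)) • m) = φ (MulOpposite.op s • MulOpposite.op r • m)
    rw [MulOpposite.op_mul, mul_smul]
  smul_zero r := rfl
  smul_add r φ ψ := rfl
  add_smul r s φ := charExt fun m => by
    show φ ((MulOpposite.op (r + s)) • m)
      = φ (MulOpposite.op r • m) + φ (MulOpposite.op s • m)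
    rw [MulOpposite.op_add, add_smul, map_add]
  zero_smul φ := charExt fun m => by
    show φ ((MulOpposite.op (0 : R)) • m) = 0
    simp

variable {M} {N : Type} [AddCommGroup N] [Module Rᵐᵒᵖ N]

/-- The Pontryagin dual of a map of right `R`-modules. -/
def charDual (ψ : M →ₗ[Rᵐᵒᵖ] N) : CharMod N →ₗ[R] CharMod M where
  toFun φ := (φ : N →+ _).comp ψ.toAddMonoidHom
  map_add' φ₁ φ₂ := rfl
  map_smul' r φ := charExt fun m => by
    show φ (MulOpposite.op r • ψ m) = φ (ψ (MulOpposite.op r • m))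
    rw [ψ.map_smul]

theorem charDual_zero : (charDual (0 : M →ₗ[Rᵐᵒᵖ] N)) = (0 : CharMod N →ₗ[R] CharMod M) :=
  LinearMap.ext fun φ => charExt fun _ => map_zero φ

/-- The Pontryagin dual complex `Hom_ℤ(C, ℚ/ℤ)` of a complex of right `R`-modules,
a complex of left `R`-modules. -/
def charCx (C : CxOp R) : Cx R :=
  CochainComplex.of (fun n => ModuleCat.of R (CharMod (C.X (-n))))
    (fun n => ModuleCat.ofHom (charDual (C.d (-(n+1)) (-n)).hom))
    (fun n => by
      have h : C.d (-(n+1+1)) (-(n+1)) ≫ C.d (-(n+1)) (-n) = 0 := C.d_comp_d _ _ _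
      have e : (ModuleCat.ofHom (charDual (C.d (-(n+1)) (-n)).hom) ≫
          ModuleCat.ofHom (charDual (C.d (-(n+1+1)) (-(n+1))).hom))
          = ModuleCat.ofHom (charDual (C.d (-(n+1+1)) (-(n+1)) ≫ C.d (-(n+1)) (-n)).hom) := rfl
      rw [e, h, ModuleCat.hom_zero, charDual_zero]
      rfl)

end Pontryagin

section Verdier

variable {R}

open Pretriangulated in
/-- The class of morphisms of `K(R)` whose cone is K-flat.  Inverting them gives the
Verdier quotient `K(R)/K-Flat`. -/
def WKFlatK : MorphismProperty (KR (R := R)) := fun X Y f =>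
  ∃ (Z : KR (R := R)) (g : Y ⟶ Z) (h : Z ⟶ X⟦(1 : ℤ)⟧),
    (Triangle.mk f g h ∈ distTriang (KR (R := R))) ∧ KFlat Z.as

open Pretriangulated in
/-- The class of morphisms of `K(R)` whose cone is pure acyclic.  Inverting them gives the
Verdier quotient of `K(R)` by the pure acyclic complexes, i.e. `D_pur(R)`. -/
def WPurK : MorphismProperty (KR (R := R)) := fun X Y f =>
  ∃ (Z : KR (R := R)) (g : Y ⟶ Z) (h : Z ⟶ X⟦(1 : ℤ)⟧),
    (Triangle.mk f g h ∈ distTriang (KR (R := R))) ∧ PureAcyclic Z.as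

open Pretriangulated in
/-- The class of morphisms of `K(R)` whose cone is acyclic.  Inverting them gives the
Verdier quotient of `K(R)` by the acyclic complexes, i.e. the derived category `D(R)`. -/
def WAcK : MorphismProperty (KR (R := R)) := fun X Y f =>
  ∃ (Z : KR (R := R)) (g : Y ⟶ Z) (h : Z ⟶ X⟦(1 : ℤ)⟧),
    (Triangle.mk f g h ∈ distTriang (KR (R := R))) ∧ Acyclic Z.as

variable (R)

/-- The K-flat derived category `D_{K-flat}(R) = K(R)/K-Flat`. -/
def DKFlat := (WKFlatK (R := R)).Localization

instance : Category (DKFlat R) := by unfold DKFlat; infer_instance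

/-- The pure derived category `D_pur(R)`, the Verdier quotient of `K(R)` by
the pure acyclic complexes. -/
def DPur := (WPurK (R := R)).Localization

instance : Category (DPur R) := by unfold DPur; infer_instance

/-- The derived category `D(R)`, the Verdier quotient of `K(R)` by
the acyclic complexes. -/
def DerCat := (WAcK (R := R)).Localization

instance : Category (DerCat R) := by unfold DerCat; infer_instance

/-- The derived category `D(R)` as the localization of `Ch(R)` at the
quasi-isomorphisms. -/
def DerCat' := (HomologicalComplex.quasiIso (ModuleCat.{0} R) (ComplexShape.up ℤ)).Localization

instance : Category (DerCat' R) := by unfold DerCat'; infer_instance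

/-- Pure homology isomorphisms as a morphism property on `Ch(R)`. -/
def pureQuasiIsoMP : MorphismProperty (Cx R) := fun _ _ f => PureQuasiIso f

/-- The pure derived category `D_pur(R)` as the localization of `Ch(R)` at the
pure homology isomorphisms. -/
def DPur' := (pureQuasiIsoMP R).Localization

instance : Category (DPur' R) := by unfold DPur'; infer_instance

end Verdier

section Recollement

universe v₁ u₁ v₂ u₂ v₃ u₃ w v

/-- A recollement of categories `T₁ → T₂ → T₃` : a fully faithful inclusion `i` with
left and right adjoints, and a quotient functor `q` with fully faithful left and right
adjoints, such that the essential image of `i` is the kernel of `q`. -/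
structure Recollement (T₁ : Type u₁) (T₂ : Type u₂) (T₃ : Type u₃)
    [Category.{v₁} T₁] [Category.{v₂} T₂] [Category.{v₃} T₃] where
  i : T₁ ⥤ T₂
  q : T₂ ⥤ T₃
  iL : T₂ ⥤ T₁
  iR : T₂ ⥤ T₁
  qL : T₃ ⥤ T₂
  qR : T₃ ⥤ T₂
  adj₁ : iL ⊣ i
  adj₂ : i ⊣ iR
  adj₃ : qL ⊣ q
  adj₄ : q ⊣ qR
  i_faithful : i.Faithful
  i_full : i.Full
  qL_faithful : qL.Faithful
  qL_full : qL.Full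
  qR_faithful : qR.Faithful
  qR_full : qR.Full
  ess : ∀ X : T₂, IsZero (q.obj X) ↔ ∃ Y : T₁, Nonempty (i.obj Y ≅ X)

variable (T : Type u₁) [Category.{v₁} T]

/-- An object `s` of a category with coproducts is compact when every morphism from `s`
to a coproduct factors through the coproduct of a finite subfamily. -/
def CompactObj {T : Type u₁} [Category.{v₁} T] (s : T) : Prop :=
  ∀ (J : Type) (g : J → T) (c : Cofan g), IsColimit c →
    ∀ f : s ⟶ c.pt, ∃ (t : Finset J) (c' : Cofan fun j : t => g j) (hc' : IsColimit c')
      (f' : s ⟶ c'.pt), f = f' ≫ hc'.desc (Cofan.mk c.pt fun j => c.inj j)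

/-- A category with coproducts is compactly generated when there is a set of compact
objects detecting the zero objects. -/
def CompactlyGenerated (T : Type u₁) [Category.{v₁} T] : Prop :=
  HasCoproducts.{0} T ∧
    ∃ S : Set T, Small.{0} S ∧ (∀ s ∈ S, CompactObj s) ∧
      ∀ X : T, (∀ s ∈ S, ∀ f g : (s : T) ⟶ X, f = g) → IsZero X

/-- A well generated category: there is a regular cardinal `α` and a (small) set `S`
of `α`-small perfect generators. -/
def WellGeneratedCat (T : Type u₁) [Category.{v₁} T] : Prop :=
  HasCoproducts.{0} T ∧
  ∃ α : Cardinal.{0}, α.IsRegular ∧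
  ∃ S : Set T, Small.{0} S ∧
    (∀ X : T, (∀ s ∈ S, ∀ f g : (s : T) ⟶ X, f = g) → IsZero X) ∧
    (∀ s ∈ S, ∀ (J : Type) (g : J → T) (c : Cofan g), IsColimit c →
      ∀ f : (s : T) ⟶ c.pt, ∃ t : Set J, Cardinal.mk t < α ∧
        ∀ (c' : Cofan fun j : t => g j) (hc' : IsColimit c'),
          ∃ f' : (s : T) ⟶ c'.pt, f = f' ≫ hc'.desc (Cofan.mk c.pt fun j => c.inj j)) ∧
    (∀ (J : Type) (X Y : J → T) (φ : ∀ j, X j ⟶ Y j)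
        (cX : Cofan X) (hX : IsColimit cX) (cY : Cofan Y), IsColimit cY →
      (∀ s ∈ S, ∀ (j : J) (g : (s : T) ⟶ Y j), ∃ h : (s : T) ⟶ X j, h ≫ φ j = g) →
      ∀ s ∈ S, ∀ g : (s : T) ⟶ cY.pt,
        ∃ h : (s : T) ⟶ cX.pt, h ≫ hX.desc (Cofan.mk cY.pt fun j => φ j ≫ cY.inj j) = g)

end Recollement

/-! Tensoring with a fixed complex `C` of right modules turns a degreewise pure short exact
sequence `0 → X → Y → Z → 0` into a short exact sequence of complexes of abelian groups
`0 → C ⊗ X → C ⊗ Y → C ⊗ Z → 0`: in each degree it is a direct sum of the sequences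
`0 → Cᵢ ⊗ Xⱼ → Cᵢ ⊗ Yⱼ → Cᵢ ⊗ Zⱼ → 0`, which are exact by purity. Two-out-of-three for
acyclicity then follows by the diagram chases behind the long exact homology sequence. -/

theorem _root_.DirectSum.exact_map {ι : Type*} {α β γ : ι → Type*}
    [∀ i, AddCommGroup (α i)] [∀ i, AddCommGroup (β i)] [∀ i, AddCommGroup (γ i)]
    {f : ∀ i, α i →+ β i} {g : ∀ i, β i →+ γ i} (h : ∀ i, Function.Exact (f i) (g i)) :
    Function.Exact (DirectSum.map f) (DirectSum.map g) := by
  classical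
  intro y
  constructor
  · intro hy
    rw [← DirectSum.sum_support_of y]
    refine AddSubgroup.sum_mem (DirectSum.map f).range fun i _ => ?_
    obtain ⟨a, ha⟩ := (h i (y i)).1 (by simpa using congr($hy i))
    exact ⟨DirectSum.of _ i a, by rw [DirectSum.map_of, ha]⟩
  · rintro ⟨x, rfl⟩
    ext i
    simp [(h i).apply_apply_eq_zero]

section GradedChase

variable {A B C : ℤ → Type*} [∀ n, AddCommGroup (A n)] [∀ n, AddCommGroup (B n)]
  [∀ n, AddCommGroup (C n)]

structure IsShortExactGraded (dA : ∀ n, A n →+ A (n + 1)) (dB : ∀ n, B n →+ B (n + 1))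
    (dC : ∀ n, C n →+ C (n + 1)) (f : ∀ n, A n →+ B n) (g : ∀ n, B n →+ C n) : Prop where
  comm_f : ∀ n a, dB n (f n a) = f (n + 1) (dA n a)
  comm_g : ∀ n b, dC n (g n b) = g (n + 1) (dB n b)
  injective : ∀ n, Function.Injective (f n)
  exact : ∀ n, Function.Exact (f n) (g n)
  surjective : ∀ n, Function.Surjective (g n)

namespace IsShortExactGraded

variable {dA : ∀ n, A n →+ A (n + 1)} {dB : ∀ n, B n →+ B (n + 1)} {dC : ∀ n, C n →+ C (n + 1)}
  {f : ∀ n, A n →+ B n} {g : ∀ n, B n →+ C n}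

theorem exact₃ (hS : IsShortExactGraded dA dB dC f g)
    (hA : ∀ n, Function.Exact (dA n) (dA (n + 1))) (hB : ∀ n, Function.Exact (dB n) (dB (n + 1)))
    (n : ℤ) : Function.Exact (dC n) (dC (n + 1)) := by
  intro y
  constructor
  · intro hy
    obtain ⟨b, rfl⟩ := hS.surjective (n + 1) y
    obtain ⟨a, ha⟩ := (hS.exact _ (dB (n + 1) b)).1 (by rw [← hS.comm_g, hy])
    have hda : dA (n + 1 + 1) a = 0 := hS.injective _ <| by
      rw [← hS.comm_f, ha, (hB (n + 1)).apply_apply_eq_zero, map_zero]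
    obtain ⟨a', rfl⟩ := (hA (n + 1) a).1 hda
    obtain ⟨b', hb'⟩ := (hB n (b - f (n + 1) a')).1 (by rw [map_sub, hS.comm_f, ha, sub_self])
    exact ⟨g n b', by rw [hS.comm_g, hb', map_sub, (hS.exact _).apply_apply_eq_zero, sub_zero]⟩
  · rintro ⟨c, rfl⟩
    obtain ⟨b, rfl⟩ := hS.surjective n c
    rw [hS.comm_g, hS.comm_g, (hB n).apply_apply_eq_zero, map_zero]

theorem exact₂ (hS : IsShortExactGraded dA dB dC f g) (hdB : ∀ n b, dB (n + 1) (dB n b) = 0)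
    (hA : ∀ n, Function.Exact (dA n) (dA (n + 1))) (hC : ∀ n, Function.Exact (dC n) (dC (n + 1)))
    (n : ℤ) : Function.Exact (dB n) (dB (n + 1)) := by
  intro y
  constructor
  · intro hy
    obtain ⟨c, hc⟩ := (hC n (g (n + 1) y)).1 (by rw [hS.comm_g, hy, map_zero])
    obtain ⟨b, rfl⟩ := hS.surjective n c
    obtain ⟨a, ha⟩ := (hS.exact (n + 1) (y - dB n b)).1 (by rw [map_sub, ← hS.comm_g, hc, sub_self])
    have hda : dA (n + 1) a = 0 := hS.injective _ <| by
      rw [← hS.comm_f, ha, map_sub, hy, hdB, sub_zero, map_zero]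
    obtain ⟨a', rfl⟩ := (hA n a).1 hda
    exact ⟨f n a' + b, by rw [map_add, hS.comm_f, ha, sub_add_cancel]⟩
  · rintro ⟨b, rfl⟩
    exact hdB n b

theorem exact₁ (hS : IsShortExactGraded dA dB dC f g)
    (hB : ∀ n, Function.Exact (dB n) (dB (n + 1))) (hC : ∀ n, Function.Exact (dC n) (dC (n + 1)))
    (n : ℤ) : Function.Exact (dA n) (dA (n + 1)) := by
  -- the chase descends to `C` one degree below `n`, so `n` is needed in the form `m + 1`
  obtain ⟨m, rfl⟩ : ∃ m, n = m + 1 := ⟨n - 1, by ring⟩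
  intro y
  constructor
  · intro hy
    obtain ⟨b, hb⟩ := (hB (m + 1) (f (m + 1 + 1) y)).1 (by rw [hS.comm_f, hy, map_zero])
    obtain ⟨c, hc⟩ := (hC m (g (m + 1) b)).1 <| by
      rw [hS.comm_g, hb, (hS.exact _).apply_apply_eq_zero]
    obtain ⟨b₀, rfl⟩ := hS.surjective m c
    obtain ⟨a, ha⟩ := (hS.exact (m + 1) (b - dB m b₀)).1 (by rw [map_sub, ← hS.comm_g, hc, sub_self])
    refine ⟨a, hS.injective _ ?_⟩
    rw [← hS.comm_f, ha, map_sub, hb, (hB m).apply_apply_eq_zero, sub_zero]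
  · rintro ⟨x, rfl⟩
    refine hS.injective _ ?_
    rw [map_zero, ← hS.comm_f, ← hS.comm_f, (hB (m + 1)).apply_apply_eq_zero]

end IsShortExactGraded

end GradedChase

section MtMap

variable {R}
variable {M M' M'' : Type} [AddCommGroup M] [Module Rᵐᵒᵖ M] [AddCommGroup M'] [Module Rᵐᵒᵖ M']
  [AddCommGroup M''] [Module Rᵐᵒᵖ M'']
  {N N' N'' : Type} [AddCommGroup N] [Module R N] [AddCommGroup N'] [Module R N']
  [AddCommGroup N''] [Module R N'']

theorem mt_induction {P : mt R M N → Prop} (x : mt R M N) (zero : P 0)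
    (tmul : ∀ (m : M) (n : N), P (QuotientAddGroup.mk (m ⊗ₜ n)))
    (add : ∀ x y, P x → P y → P (x + y)) : P x := by
  induction x using QuotientAddGroup.induction_on with | H y => ?_
  induction y using TensorProduct.induction_on with
  | zero => exact zero
  | tmul m n => exact tmul m n
  | add a b ha hb => exact add _ _ ha hb

theorem mtMap_mtMap (f : M →ₗ[Rᵐᵒᵖ] M') (f' : M' →ₗ[Rᵐᵒᵖ] M'') (g : N →ₗ[R] N')
    (g' : N' →ₗ[R] N'') (x : mt R M N) :
    mtMap f' g' (mtMap f g x) = mtMap (f' ∘ₗ f) (g' ∘ₗ g) x := by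
  induction x using mt_induction with
  | zero => simp only [map_zero]
  | tmul m n => rfl
  | add a b ha hb => simp only [map_add, ha, hb]

theorem mtMap_zero_left (g : N →ₗ[R] N') : mtMap (0 : M →ₗ[Rᵐᵒᵖ] M') g = 0 := by
  ext x
  induction x using mt_induction with
  | zero => simp only [map_zero]
  | tmul m n => exact congrArg QuotientAddGroup.mk (TensorProduct.zero_tmul _ _)
  | add a b ha hb => simp only [map_add, ha, hb]

theorem mtMap_zero_right (f : M →ₗ[Rᵐᵒᵖ] M') : mtMap f (0 : N →ₗ[R] N') = 0 := by
  ext x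
  induction x using mt_induction with
  | zero => simp only [map_zero]
  | tmul m n => exact congrArg QuotientAddGroup.mk (TensorProduct.tmul_zero _ _)
  | add a b ha hb => simp only [map_add, ha, hb]

end MtMap

section TensorComplex

variable {R}

theorem td_of (C : CxOp R) (W : Cx R) (n i : ℤ) (a : mt R (C.X i) (W.X (n - i))) :
    td C W n (DirectSum.of _ i a) =
      DirectSum.of (fun j => mt R (C.X j) (W.X (n + 1 - j))) (i + 1)
        (mtMap (C.d i (i + 1)).hom ((W.XIsoOfEq (show n - i = n + 1 - (i + 1) by ring)).hom.hom) a)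
      + (((-1 : ℤˣ) ^ i : ℤˣ) : ℤ) •
        DirectSum.of (fun j => mt R (C.X j) (W.X (n + 1 - j))) i
          (mtMap LinearMap.id
            ((W.XIsoOfEq (show n - i + 1 = n + 1 - i by ring)).hom.hom ∘ₗ
              (W.d (n - i) (n - i + 1)).hom) a) :=
  DirectSum.toAddMonoid_of _ _ _

theorem tmapR_eq_map (C : CxOp R) {W W' : Cx R} (φ : W ⟶ W') (n : ℤ) :
    tmapR C φ n = DirectSum.map fun i => mtMap LinearMap.id (φ.f (n - i)).hom := by
  refine DirectSum.addHom_ext fun i a => ?_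
  rw [DirectSum.map_of]
  exact DirectSum.toAddMonoid_of _ _ _

theorem tmapR_td (C : CxOp R) {W W' : Cx R} (φ : W ⟶ W') (n : ℤ) (x : tobj C W n) :
    td C W' n (tmapR C φ n x) = tmapR C φ (n + 1) (td C W n x) := by
  induction x using DirectSum.induction_on with
  | zero => simp only [map_zero]
  | add x y hx hy => simp only [map_add, hx, hy]
  | of i a =>
    simp only [tmapR_eq_map, DirectSum.map_of, td_of, map_add, map_zsmul, mtMap_mtMap,
      ← ModuleCat.hom_comp, LinearMap.id_comp, LinearMap.comp_id,
      HomologicalComplex.XIsoOfEq_hom_naturality, HomologicalComplex.Hom.comm_assoc, Category.assoc]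

theorem td_td (C : CxOp R) (W : Cx R) (n : ℤ) (x : tobj C W n) :
    td C W (n + 1) (td C W n x) = 0 := by
  induction x using DirectSum.induction_on with
  | zero => simp only [map_zero]
  | add x y hx hy => simp only [map_add, hx, hy, add_zero]
  | of i a =>
    simp only [td_of, map_add, map_zsmul, mtMap_mtMap, ← ModuleCat.hom_comp,
      LinearMap.id_comp, LinearMap.comp_id, HomologicalComplex.d_comp_d,
      HomologicalComplex.XIsoOfEq_hom_comp_d, HomologicalComplex.d_comp_XIsoOfEq_hom,
      ModuleCat.hom_zero, mtMap_zero_left, mtMap_zero_right,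
      AddMonoidHom.zero_apply, map_zero, smul_zero, zero_add, add_zero, ← add_zsmul]
    -- `d_C ∘ d_C` and `d_W ∘ d_W` vanish; the two mixed terms agree and carry opposite signs
    have hsign : (((-1 : ℤˣ) ^ (i + 1) : ℤˣ) : ℤ) + (((-1 : ℤˣ) ^ i : ℤˣ) : ℤ) = 0 := by
      rw [zpow_add_one, Units.val_mul, Units.val_neg, Units.val_one, mul_neg_one, neg_add_cancel]
    rw [hsign, zero_zsmul]

theorem DWPureSES.isShortExactGraded {X Y Z : Cx R} {f : X ⟶ Y} {g : Y ⟶ Z}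
    (hfg : DWPureSES f g) (C : CxOp R) :
    IsShortExactGraded (td C X) (td C Y) (td C Z) (tmapR C f) (tmapR C g) where
  comm_f := tmapR_td C f
  comm_g := tmapR_td C g
  injective n := by
    rw [tmapR_eq_map]
    exact (DirectSum.map_injective _).2 fun i => ((hfg (n - i)).2 (C.X i)).1
  exact n := by
    rw [tmapR_eq_map, tmapR_eq_map]
    exact DirectSum.exact_map fun i => ((hfg (n - i)).2 (C.X i)).2.1
  surjective n := by
    rw [tmapR_eq_map]
    exact (DirectSum.map_surjective _).2 fun i => ((hfg (n - i)).2 (C.X i)).2.2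

end TensorComplex

/-- Proposition 3.3(2): the class of `𝒞`-acyclic complexes is thick in `Ch(R)_pur`:
it satisfies two-out-of-three on short exact sequences of complexes that are pure
exact in each degree. -/
theorem cAcyclic_twoOutOfThree (𝒞 : Set (CxOp R)) :
    TwoOutOfThree {W : Cx R | CAcyclic 𝒞 W} := by
  intro X Y Z f g hfg
  have hS := hfg.isShortExactGraded
  exact ⟨fun hX hY C hC => (hS C).exact₃ (hX C hC) (hY C hC),
    fun hX hZ C hC => (hS C).exact₂ (td_td C Y) (hX C hC) (hZ C hC),
    fun hY hZ C hC => (hS C).exact₁ (hY C hC) (hZ C hC)⟩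

end KFlatPaper
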